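/- arXiv:1602.01981 — 2 statements merged into one kernel-verified Lean document; each statement's English description precedes it below -/
import Mathlib

section
/- Let R be a commutative Noetherian ring, I_1, ..., I_t ideals of R, and M a finitely generated R-module. Then there exists k ∈ ℕ such that for all (n_1, ..., n_t) with each n_j ≥ k, the set Ass_R(M / (I_1^{n_1} ⋯ I_t^{n_t}) M) is independent of (n_1, ..., n_t). -/
/-!
Write `𝕀(n) = I₁ ^ n₁ ⋯ I_t ^ n_t`. In the idealization `R ⋉ M` the module `M` becomes the ideal
`K = 0 ⋉ M`, and `K / 𝕀(n) K ≅ M / 𝕀(n) M`, so it is enough to show that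
`A(n) = Ass(K / 𝕀(n) K)` is eventually constant for an ideal `K` of a Noetherian ring.

For an ideal `J`, the sets `Ass(𝕀(n) K / 𝕀(n) J)` are eventually constant: they all lie in the
finite set of associated primes of one finitely generated module over the multi-Rees algebra
`R[I₁ X₁, …, I_t X_t]`, and for a fixed prime `p` membership is eventually decided. Indeed `p` is
associated exactly when no `a ∉ p` kills the `p`-torsion, i.e. maps
`H(n) = 𝕀(n) K ∩ (𝕀(n) J : p)` into `𝕀(n) J`. The `H(n)` form a graded ideal of the Noetherian
Rees algebra, so `H(n + eᵢ) = Iᵢ H(n)` for large `n`, and once some `a ∉ p` works for `n` it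
works for all larger `n`.

With `J = Iᵢ K` this gives limits `Bᵢ`, and the exact sequences
`0 → 𝕀(n) K / 𝕀(n) Iᵢ K → K / 𝕀(n + eᵢ) K → K / 𝕀(n) K → 0` give
`Bᵢ ⊆ A(n + eᵢ) ⊆ Bᵢ ∪ A(n)`. So the finite sets `A(n) \ ⋃ Bᵢ` eventually decrease along every
coordinate, hence stabilize, and so does `A(n)`.
-/

open Filter Submodule

namespace Submodule

variable {R M : Type*} [CommRing R] [AddCommGroup M] [Module R M]

abbrev Subquotient (U W : Submodule R M) : Type _ := ↥U ⧸ W.submoduleOf U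

variable {U V W : Submodule R M}

theorem Subquotient.mk_eq_zero (x : U) :
    (Submodule.Quotient.mk x : U.Subquotient W) = 0 ↔ (x : M) ∈ W :=
  Quotient.mk_eq_zero _

theorem submoduleOf_le_comap_inclusion (hVU : V ≤ U) :
    W.submoduleOf V ≤ (W.submoduleOf U).comap (inclusion hVU) := fun _ => id

theorem submoduleOf_mono (hWV : W ≤ V) : W.submoduleOf U ≤ V.submoduleOf U := fun _ hx => hWV hx

theorem mapQ_inclusion_injective (hVU : V ≤ U) :
    Function.Injective ((W.submoduleOf V).mapQ _ _ (submoduleOf_le_comap_inclusion hVU)) := by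
  rw [← LinearMap.ker_eq_bot, ker_mapQ]
  exact mkQ_map_self _

theorem associatedPrimes_subquotient_subset_of_le (hVU : V ≤ U) :
    associatedPrimes R (V.Subquotient W) ⊆ associatedPrimes R (U.Subquotient W) :=
  associatedPrimes.subset_of_injective (mapQ_inclusion_injective hVU)

theorem associatedPrimes_subquotient_subset_union (hWV : W ≤ V) (hVU : V ≤ U) :
    associatedPrimes R (U.Subquotient W) ⊆
      associatedPrimes R (V.Subquotient W) ∪ associatedPrimes R (U.Subquotient V) := by
  refine associatedPrimes.subset_union_of_exact (mapQ_inclusion_injective hVU)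
    (g := factor (submoduleOf_mono (U := U) hWV)) ?_
  rw [LinearMap.exact_iff, ker_mapQ, range_mapQ, range_inclusion]
  rfl

end Submodule

section TorsionCriterion

variable {R M : Type*} [CommRing R] [AddCommGroup M] [Module R M]

theorem mem_associatedPrimes_iff_annihilator_torsionBySet_le [IsNoetherianRing R]
    [IsNoetherian R M] {p : Ideal R} (hp : p.IsPrime) :
    p ∈ associatedPrimes R M ↔ (torsionBySet R M p).annihilator ≤ p := by
  constructor
  · intro hass
    obtain ⟨-, x, rfl⟩ := isAssociatedPrime_iff.1 hass
    have hx : x ∈ torsionBySet R M ((⊥ : Submodule R M).colon {x}) := by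
      simp [mem_torsionBySet_iff, mem_colon_singleton]
    intro r hr
    exact mem_colon_singleton.2 (by simpa using mem_annihilator.1 hr x hx)
  · intro hle
    obtain ⟨s, hs⟩ := IsNoetherian.noetherian (torsionBySet R M p)
    have hann : (torsionBySet R M p).annihilator =
        s.inf fun x => (⊥ : Submodule R M).colon {x} := by
      ext r
      simp [← hs, mem_annihilator_span, mem_finsetInf, mem_colon_singleton]
    obtain ⟨x, hxs, hxp⟩ := hp.inf_le'.1 (hann ▸ hle)
    have hx : x ∈ torsionBySet R M p := hs ▸ subset_span hxs
    refine isAssociatedPrime_iff.2 ⟨hp, x, le_antisymm (fun c hc => ?_) hxp⟩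
    exact mem_colon_singleton.2 (by simpa using (mem_torsionBySet_iff _ _).1 hx ⟨c, hc⟩)

theorem Ideal.annihilator_torsionBySet_subquotient (p U W : Ideal R) :
    (torsionBySet R (U.Subquotient W) p).annihilator = W.colon ↑(U ⊓ W.colon ↑p) := by
  have hmk : ∀ (c : R) (v : U), c • (Submodule.Quotient.mk v : U.Subquotient W) = 0 ↔ c * v ∈ W :=
    fun c v => by rw [← Quotient.mk_smul, Subquotient.mk_eq_zero]; rfl
  ext a
  simp only [mem_annihilator, mem_torsionBySet_iff, Subtype.forall, mem_colon, coe_inf,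
    Set.mem_inter_iff, SetLike.mem_coe, smul_eq_mul]
  constructor
  · rintro h v ⟨hvU, hvp⟩
    refine (hmk a ⟨v, hvU⟩).1 (h _ fun c hc => (hmk c ⟨v, hvU⟩).2 ?_)
    simpa [mul_comm] using hvp c hc
  · intro h x hx
    obtain ⟨⟨v, hvU⟩, rfl⟩ := Submodule.Quotient.mk_surjective _ x
    refine (hmk a ⟨v, hvU⟩).2 (h v ⟨hvU, fun c hc => ?_⟩)
    simpa [mul_comm] using (hmk c ⟨v, hvU⟩).1 (hx c hc)

theorem Ideal.mem_associatedPrimes_subquotient_iff [IsNoetherianRing R] {p U W : Ideal R}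
    (hp : p.IsPrime) :
    p ∈ associatedPrimes R (U.Subquotient W) ↔ W.colon ↑(U ⊓ W.colon ↑p) ≤ p := by
  rw [mem_associatedPrimes_iff_annihilator_torsionBySet_le hp,
    Ideal.annihilator_torsionBySet_subquotient]

end TorsionCriterion

section RestrictScalars

variable {A B : Type*} [CommRing A] [CommRing B] [Algebra A B]

theorem associatedPrimes_quotient_subset_comap (P : Ideal B) [P.IsPrime] :
    associatedPrimes A (B ⧸ P) ⊆ {P.comap (algebraMap A B)} := by
  rintro q ⟨hq, x, rfl⟩
  obtain ⟨b, rfl⟩ := Ideal.Quotient.mk_surjective x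
  have hb : b ∉ P := fun hb => hq.ne_top <| by
    simp [(Ideal.Quotient.eq_zero_iff_mem).2 hb]
  have hcolon : (⊥ : Submodule A (B ⧸ P)).colon {Ideal.Quotient.mk P b} =
      P.comap (algebraMap A B) := by
    ext a
    rw [mem_colon_singleton, Submodule.mem_bot, Algebra.smul_def,
      IsScalarTower.algebraMap_apply A B (B ⧸ P), Ideal.Quotient.algebraMap_eq, ← map_mul,
      Ideal.Quotient.eq_zero_iff_mem, Ideal.mem_comap]
    exact ⟨fun h => (Ideal.IsPrime.mem_or_mem ‹_› h).resolve_right hb,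
      fun h => P.mul_mem_right b h⟩
  rw [Set.mem_singleton_iff, hcolon, (Ideal.IsPrime.comap _).radical]

theorem associatedPrimes_finite_of_isScalarTower [IsNoetherianRing B] {X : Type*}
    [AddCommGroup X] [Module A X] [Module B X] [IsScalarTower A B X] [Module.Finite B X] :
    (associatedPrimes A X).Finite := by
  induction ‹Module.Finite B X› using IsNoetherianRing.induction_on_isQuotientEquivQuotientPrime B
    generalizing ‹Module A X› with
  | subsingleton N => simp [associatedPrimes.eq_empty_of_subsingleton]
  | quotient N P e =>
    rw [LinearEquiv.AssociatedPrimes.eq (e.restrictScalars A)]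
    exact (Set.finite_singleton _).subset (associatedPrimes_quotient_subset_comap P.1)
  | exact N₁ N₂ N₃ f g hf _ hfg h₁ h₃ =>
    let : Module A N₁ := .compHom N₁ (algebraMap A B)
    let : Module A N₃ := .compHom N₃ (algebraMap A B)
    have : IsScalarTower A B N₁ := ⟨fun a b n => by rw [Algebra.smul_def, mul_smul]; rfl⟩
    have : IsScalarTower A B N₃ := ⟨fun a b n => by rw [Algebra.smul_def, mul_smul]; rfl⟩
    exact (h₁.union h₃).subset (associatedPrimes.subset_union_of_exact
      (f := f.restrictScalars A) (g := g.restrictScalars A) hf hfg)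

theorem associatedPrimes_quotient_finite [IsNoetherianRing B] (J : Ideal B) :
    (associatedPrimes A (B ⧸ J)).Finite :=
  associatedPrimes_finite_of_isScalarTower (B := B)

end RestrictScalars

section Semilinear

variable {A R X Y : Type*} [CommRing A] [CommRing R] [AddCommGroup X] [Module A X]
  [AddCommGroup Y] [Module R Y] {σ : A →+* R}

theorem colon_bot_singleton_eq_comap {f : X →ₛₗ[σ] Y} (hf : Function.Injective f) (x : X) :
    (⊥ : Submodule A X).colon {x} = ((⊥ : Submodule R Y).colon {f x}).comap σ := by
  ext a
  rw [Ideal.mem_comap, mem_colon_singleton, mem_colon_singleton, Submodule.mem_bot,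
    Submodule.mem_bot, ← f.map_smulₛₗ, map_eq_zero_iff f hf]

theorem associatedPrimes_eq_image_comap_of_bijective (hσ : Function.Surjective σ)
    {f : X →ₛₗ[σ] Y} (hf : Function.Bijective f) :
    associatedPrimes A X = Ideal.comap σ '' associatedPrimes R Y := by
  ext q
  constructor
  · rintro ⟨hq, x, rfl⟩
    set Q := ((⊥ : Submodule R Y).colon {f x}).radical
    have hqQ : ((⊥ : Submodule A X).colon {x}).radical = Q.comap σ := by
      rw [colon_bot_singleton_eq_comap hf.1, Ideal.comap_radical]
    have hQ : Q.IsPrime := by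
      rw [← Ideal.map_comap_of_surjective σ hσ Q, ← hqQ]
      refine Ideal.map_isPrime_of_surjective hσ ?_
      rw [hqQ]
      exact Ideal.comap_mono bot_le
    exact ⟨Q, ⟨hQ, f x, rfl⟩, hqQ.symm⟩
  · rintro ⟨Q, ⟨hQ, y, rfl⟩, rfl⟩
    obtain ⟨x, rfl⟩ := hf.2 y
    refine ⟨Ideal.IsPrime.comap σ, x, ?_⟩
    rw [colon_bot_singleton_eq_comap hf.1, Ideal.comap_radical]

theorem associatedPrimes_quotient_ker_eq_image_comap (hσ : Function.Surjective σ)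
    {g : X →ₛₗ[σ] Y} (hg : Function.Surjective g) :
    associatedPrimes A (X ⧸ LinearMap.ker g) = Ideal.comap σ '' associatedPrimes R Y := by
  refine associatedPrimes_eq_image_comap_of_bijective hσ (f := (LinearMap.ker g).liftQ g le_rfl)
    ⟨?_, ?_⟩
  · rw [← LinearMap.ker_eq_bot]
    exact ker_liftQ_eq_bot' _ _ rfl
  · intro y
    obtain ⟨x, rfl⟩ := hg y
    exact ⟨Submodule.Quotient.mk x, rfl⟩

end Semilinear

theorem Filter.exists_eventually_eq_of_subset_finite {β α : Type*} {l : Filter β}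
    {f : β → Set α} {U : Set α} (hU : U.Finite) (hf : ∀ n, f n ⊆ U)
    (h : ∀ p ∈ U, (∀ᶠ n in l, p ∈ f n) ∨ ∀ᶠ n in l, p ∉ f n) :
    ∃ S, ∀ᶠ n in l, f n = S := by
  refine ⟨{p ∈ U | ∀ᶠ n in l, p ∈ f n}, ?_⟩
  have hdec : ∀ᶠ n in l, ∀ p ∈ U, (p ∈ f n ↔ ∀ᶠ n in l, p ∈ f n) := by
    refine (eventually_all_finite hU).2 fun p hp => ?_
    rcases h p hp with h' | h'
    · exact h'.mono fun n hn => iff_of_true hn h'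
    · by_cases hl : ∀ᶠ n in l, p ∈ f n
      · exact hl.mono fun n hn => iff_of_true hn hl
      · exact h'.mono fun n hn => iff_of_false hn hl
  filter_upwards [hdec] with n hn
  ext p
  by_cases hp : p ∈ U
  · simp [hp, hn p hp]
  · exact iff_of_false (fun h => hp (hf n h)) fun h => hp h.1

namespace Finsupp

variable {ι : Type*}

theorem le_induction {P : (ι →₀ ℕ) → Prop} {z : ι →₀ ℕ} (hz : P z)
    (step : ∀ n, z ≤ n → P n → ∀ j, P (n + single j 1)) {n : ι →₀ ℕ} (hn : z ≤ n) : P n := by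
  suffices h : ∀ d m, z ≤ m → P m → P (m + d) by
    simpa [add_tsub_cancel_of_le hn] using h (n - z) z le_rfl hz
  intro d
  induction d using Finsupp.induction_linear with
  | zero => simp
  | add f g hf hg =>
    intro m hm hPm
    rw [← add_assoc]
    exact hg _ (hm.trans le_self_add) (hf m hm hPm)
  | single j k =>
    induction k with
    | zero => simp
    | succ k ih =>
      intro m hm hPm
      rw [single_add, ← add_assoc]
      exact step _ (hm.trans le_self_add) (ih m hm hPm) j

theorem eventually_of_eventually_add {P : (ι →₀ ℕ) → Prop} (d : ι →₀ ℕ)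
    (h : ∀ᶠ n in atTop, P (n + d)) : ∀ᶠ n in atTop, P n := by
  obtain ⟨N, hN⟩ := eventually_atTop.1 h
  refine eventually_atTop.2 ⟨N + d, fun n hn => ?_⟩
  simpa [tsub_add_cancel_of_le (le_add_self.trans hn)] using
    hN (n - d) (le_tsub_of_add_le_right hn)

theorem eventually_or_eventually_not_of_step {P : (ι →₀ ℕ) → Prop}
    (h : ∀ᶠ n in atTop, ∀ j, P n → P (n + single j 1)) :
    (∀ᶠ n in atTop, P n) ∨ ∀ᶠ n in atTop, ¬ P n := by
  obtain ⟨N, hN⟩ := eventually_atTop.1 h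
  by_cases hz : ∃ z, N ≤ z ∧ P z
  · obtain ⟨z, hNz, hz⟩ := hz
    exact .inl (eventually_atTop.2 ⟨z, fun n hn =>
      le_induction hz (fun m hm hPm j => hN m (hNz.trans hm) j hPm) hn⟩)
  · push Not at hz
    exact .inr (eventually_atTop.2 ⟨N, hz⟩)

theorem exists_eventually_eq_of_step_subset {α : Type*} {g : (ι →₀ ℕ) → Set α}
    (hfin : ∀ n, (g n).Finite) (h : ∀ᶠ n in atTop, ∀ j, g (n + single j 1) ⊆ g n) :
    ∃ S, ∀ᶠ n in atTop, g n = S := by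
  obtain ⟨N, hN⟩ := eventually_atTop.1 h
  let card d := (g (N + d)).ncard
  set n₀ := N + Function.argmin card
  refine ⟨g n₀, eventually_atTop.2 ⟨n₀, fun n hn => ?_⟩⟩
  have hsub : g n ⊆ g n₀ := le_induction (P := fun n => g n ⊆ g n₀) subset_rfl
    (fun m hm hPm j => (hN m (le_self_add.trans hm) j).trans hPm) hn
  refine Set.eq_of_subset_of_ncard_le hsub ?_ (hfin _)
  simpa [card, add_tsub_cancel_of_le (le_self_add.trans hn)] using
    Function.argmin_le card (n - N)

end Finsupp

section Colon

variable {A : Type*} [CommRing A]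

theorem Ideal.mul_colon_le (X N : Ideal A) (S : Set A) : X * N.colon S ≤ (X * N).colon S :=
  Submodule.mul_le.2 fun x hx y hy => mem_colon.2 fun s hs => by
    rw [smul_eq_mul, mul_assoc]
    exact Ideal.mul_mem_mul hx (mem_colon.1 hy s hs)

theorem Ideal.colon_le_mul_colon_mul (X N S : Ideal A) : N.colon ↑S ≤ (X * N).colon ↑(X * S) :=
  fun r hr => mem_colon.2 fun t ht => by
    refine Submodule.mul_induction_on ht (fun x hx s hs => ?_) fun s s' hs hs' => ?_
    · rw [smul_eq_mul, mul_left_comm]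
      exact Ideal.mul_mem_mul hx (mem_colon.1 hr s hs)
    · rw [smul_add]
      exact add_mem hs hs'

end Colon

namespace Ideal

open Finsupp

variable {A : Type*} [CommRing A] {ι : Type*} [Fintype ι] (I : ι → Ideal A)

noncomputable def prodPow (d : ι →₀ ℕ) : Ideal A := ∏ j, I j ^ d j

@[simp]
theorem prodPow_zero : prodPow I 0 = ⊤ := by
  simp [prodPow, Ideal.one_eq_top]

theorem prodPow_add (a b : ι →₀ ℕ) : prodPow I (a + b) = prodPow I a * prodPow I b := by
  simp only [prodPow, Finsupp.add_apply, pow_add, Finset.prod_mul_distrib]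

theorem prodPow_single (j : ι) (k : ℕ) : prodPow I (single j k) = I j ^ k := by
  rw [prodPow, Finset.prod_eq_single j (fun j' _ hj' => by simp [hj'.symm])
    (by simp)]
  simp

theorem prodPow_add_single (d : ι →₀ ℕ) (j : ι) :
    prodPow I (d + single j 1) = prodPow I d * I j := by
  rw [prodPow_add, prodPow_single, pow_one]

theorem prodPow_le {T : (ι →₀ ℕ) → Ideal A} (h0 : T 0 = ⊤)
    (hmul : ∀ a b, T a * T b ≤ T (a + b)) (hI : ∀ j, I j ≤ T (single j 1)) (d : ι →₀ ℕ) :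
    prodPow I d ≤ T d := by
  induction d using Finsupp.induction_linear with
  | zero => simp [h0]
  | add a b ha hb => exact (prodPow_add I a b).trans_le ((mul_mono ha hb).trans (hmul a b))
  | single j k =>
    rw [prodPow_single]
    induction k with
    | zero => simp [h0]
    | succ k ih =>
      rw [pow_succ, single_add]
      exact (mul_mono ih (hI j)).trans (hmul _ _)

theorem prodPow_mul_prodPow_mul (a b : ι →₀ ℕ) (J : Ideal A) :
    prodPow I a * (prodPow I b * J) = prodPow I (a + b) * J := by
  rw [prodPow_add, mul_assoc]

theorem prodPow_add_single_mul (d : ι →₀ ℕ) (i : ι) (J : Ideal A) :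
    prodPow I (d + single i 1) * J = prodPow I d * (I i * J) := by
  rw [prodPow_add_single, mul_assoc]

end Ideal

section MultiRees

open Ideal Finsupp MvPolynomial

variable {A : Type*} [CommRing A] {ι : Type*} [Fintype ι] (I : ι → Ideal A)

def multiReesAlgebra : Subalgebra A (MvPolynomial ι A) where
  carrier := {f | ∀ d, f.coeff d ∈ prodPow I d}
  mul_mem' {f g} hf hg d := by
    classical
    rw [coeff_mul]
    refine sum_mem fun uv huv => ?_
    rw [← Finset.HasAntidiagonal.mem_antidiagonal.1 huv, prodPow_add]
    exact Ideal.mul_mem_mul (hf _) (hg _)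
  add_mem' hf hg d := by
    rw [coeff_add]
    exact add_mem (hf d) (hg d)
  algebraMap_mem' r d := by
    classical
    rw [algebraMap_eq, coeff_C]
    split_ifs with h
    · simp [← h]
    · exact zero_mem _

variable {I}

theorem monomial_mem_multiReesAlgebra {d : ι →₀ ℕ} {r : A} (hr : r ∈ prodPow I d) :
    monomial d r ∈ multiReesAlgebra I := fun d' => by
  classical
  rw [coeff_monomial]
  split_ifs with h
  · exact h ▸ hr
  · exact zero_mem _

theorem multiReesAlgebra_eq_adjoin {s : ι → Set A} (hs : ∀ j, span (s j) = I j) :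
    multiReesAlgebra I = Algebra.adjoin A (⋃ j, monomial (single j 1) '' s j) := by
  refine le_antisymm (fun f hf => ?_) (Algebra.adjoin_le ?_)
  · set S := Algebra.adjoin A (⋃ j, monomial (single j 1) '' s j)
    let T : (ι →₀ ℕ) → Ideal A := fun d => (Subalgebra.toSubmodule S).comap (monomial d)
    have hT : ∀ d, prodPow I d ≤ T d := prodPow_le I
      (eq_top_iff.2 fun r _ => by simpa [T] using S.algebraMap_mem r)
      (fun a b => Submodule.mul_le.2 fun x hx y hy => by
        simpa [T, monomial_mul] using S.mul_mem (x := monomial a x) (y := monomial b y) hx hy)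
      (fun j => (hs j) ▸ Submodule.span_le.2 fun a ha =>
        Algebra.subset_adjoin (Set.mem_iUnion.2 ⟨j, a, ha, rfl⟩))
    rw [f.as_sum]
    exact Subalgebra.sum_mem _ fun d _ => hT d (hf d)
  · rintro _ ⟨_, ⟨j, rfl⟩, a, ha, rfl⟩
    refine monomial_mem_multiReesAlgebra ?_
    rw [prodPow_single, pow_one, ← hs j]
    exact Ideal.subset_span ha

instance [IsNoetherianRing A] : IsNoetherianRing (multiReesAlgebra I) := by
  classical
  choose s hs using fun j => IsNoetherian.noetherian (I j)
  have : Algebra.FiniteType A (multiReesAlgebra I) := by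
    refine ⟨(Subalgebra.fg_top _).2
      ⟨Finset.univ.biUnion fun j => (s j).image (monomial (single j 1)), ?_⟩⟩
    rw [multiReesAlgebra_eq_adjoin hs]
    simp
  exact Algebra.FiniteType.isNoetherianRing A _

variable (I) in
def multiReesIdeal (H : (ι →₀ ℕ) → Ideal A) (hH : ∀ a b, prodPow I a * H b ≤ H (a + b)) :
    Ideal (multiReesAlgebra I) where
  carrier := {f | ∀ d, (f : MvPolynomial ι A).coeff d ∈ H d}
  add_mem' hf hg d := by
    rw [Subalgebra.coe_add, coeff_add]
    exact add_mem (hf d) (hg d)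
  zero_mem' d := by simp
  smul_mem' c f hf d := by
    classical
    rw [smul_eq_mul, Subalgebra.coe_mul, coeff_mul]
    refine sum_mem fun uv huv => ?_
    rw [← Finset.HasAntidiagonal.mem_antidiagonal.1 huv]
    exact hH _ _ (Ideal.mul_mem_mul (c.2 _) (hf _))

theorem mk_monomial_mem_multiReesIdeal_iff {H : (ι →₀ ℕ) → Ideal A}
    {hH : ∀ a b, prodPow I a * H b ≤ H (a + b)} {d : ι →₀ ℕ} {x : A}
    (hx : monomial d x ∈ multiReesAlgebra I) :
    (⟨monomial d x, hx⟩ : multiReesAlgebra I) ∈ multiReesIdeal I H hH ↔ x ∈ H d := by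
  classical
  refine ⟨fun h => by simpa using h d, fun h d' => ?_⟩
  change (monomial d x).coeff d' ∈ H d'
  rw [coeff_monomial]
  split_ifs with e
  · exact e ▸ h
  · exact zero_mem _

theorem coeff_add_single_mul_mem {H : (ι →₀ ℕ) → Ideal A}
    (hH : ∀ a b, prodPow I a * H b ≤ H (a + b)) {f g : MvPolynomial ι A}
    (hf : f ∈ multiReesAlgebra I) (hg : ∀ d, g.coeff d ∈ H d) {m : ι →₀ ℕ}
    (hgm : ∀ v ∈ g.support, v ≤ m) (i : ι) :
    (f * g).coeff (m + single i 1) ∈ I i * H m := by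
  classical
  rw [coeff_mul]
  refine sum_mem fun ⟨u, v⟩ huv => ?_
  have huv : u + v = m + single i 1 := Finset.HasAntidiagonal.mem_antidiagonal.1 huv
  by_cases hv : v ∈ g.support
  · have hu : u = m - v + single i 1 :=
      (eq_tsub_of_add_eq huv).trans (tsub_add_eq_add_tsub (hgm v hv)).symm
    subst hu
    have hfu := hf (m - v + single i 1)
    rw [prodPow_add_single] at hfu
    have hmem : f.coeff (m - v + single i 1) * g.coeff v ∈ I i * (prodPow I (m - v) * H v) := by
      rw [← mul_assoc, mul_comm (I i)]
      exact Ideal.mul_mem_mul hfu (hg v)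
    have := Ideal.mul_mono_right (hH (m - v) v) hmem
    rwa [tsub_add_cancel_of_le (hgm v hv)] at this
  · rw [MvPolynomial.notMem_support_iff.1 hv, mul_zero]
    exact zero_mem _

theorem eventually_apply_add_single_le_mul [IsNoetherianRing A] {H : (ι →₀ ℕ) → Ideal A}
    (hle : ∀ d, H d ≤ prodPow I d) (hH : ∀ a b, prodPow I a * H b ≤ H (a + b)) :
    ∀ᶠ m in atTop, ∀ i, H (m + single i 1) ≤ I i * H m := by
  classical
  obtain ⟨G, hG⟩ := IsNoetherian.noetherian (multiReesIdeal I H hH)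
  have hsupp : ∀ᶠ m in atTop, ∀ g ∈ G, ∀ v ∈ (g : MvPolynomial ι A).support, v ≤ m := by
    simp only [eventually_all_finset]
    exact fun g _ v _ => eventually_ge_atTop v
  filter_upwards [hsupp] with m hm i x hx
  have hmono := (mk_monomial_mem_multiReesIdeal_iff (hH := hH)
    (monomial_mem_multiReesAlgebra (hle _ hx))).2 hx
  rw [← hG, Submodule.mem_span_finset] at hmono
  obtain ⟨c, -, hc⟩ := hmono
  have hx : x = ∑ g ∈ G, ((c g : MvPolynomial ι A) * g).coeff (m + single i 1) := by
    have := congrArg (fun y : multiReesAlgebra I => (y : MvPolynomial ι A).coeff (m + single i 1))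
      hc
    rw [coeff_monomial, if_pos rfl, AddSubmonoidClass.coe_finsetSum, coeff_sum] at this
    exact this.symm
  rw [hx]
  refine sum_mem fun g hg => coeff_add_single_mul_mem hH (c g).2 ?_ (hm g hg) i
  exact (hG ▸ Submodule.subset_span hg : g ∈ multiReesIdeal I H hH)

variable (I)

noncomputable def multiReesAlgebra.monomial (d : ι →₀ ℕ) :
    prodPow I d →ₗ[A] multiReesAlgebra I where
  toFun v := ⟨MvPolynomial.monomial d v, monomial_mem_multiReesAlgebra v.2⟩
  map_add' _ _ := Subtype.ext (map_add _ _ _)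
  map_smul' _ _ := Subtype.ext (map_smul _ _ _)

theorem associatedPrimes_subquotient_prodPow_subset (J : Ideal A) (d : ι →₀ ℕ) :
    associatedPrimes A ((prodPow I d).Subquotient (prodPow I d * J)) ⊆
      associatedPrimes A (multiReesAlgebra I ⧸
        multiReesIdeal I (prodPow I · * J) fun a b => (prodPow_mul_prodPow_mul I a b J).le) := by
  set W := multiReesIdeal I (prodPow I · * J) fun a b => (prodPow_mul_prodPow_mul I a b J).le
  let φ := (Ideal.Quotient.mkₐ A W).toLinearMap ∘ₗ multiReesAlgebra.monomial I d
  have hker : (prodPow I d * J).submoduleOf (prodPow I d) = LinearMap.ker φ := by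
    ext v
    simp only [φ, LinearMap.mem_ker, LinearMap.coe_comp, Function.comp_apply,
      AlgHom.toLinearMap_apply, Ideal.Quotient.mkₐ_eq_mk, Ideal.Quotient.eq_zero_iff_mem]
    exact (mk_monomial_mem_multiReesIdeal_iff (H := (prodPow I · * J))
      (monomial_mem_multiReesAlgebra v.2)).symm
  refine associatedPrimes.subset_of_injective
    (f := ((prodPow I d * J).submoduleOf _).liftQ φ hker.le) ?_
  rw [← LinearMap.ker_eq_bot]
  exact ker_liftQ_eq_bot' _ _ hker

end MultiRees

section PowerFiltration

open Ideal Finsupp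

variable {A : Type*} [CommRing A] [IsNoetherianRing A] {ι : Type*} [Fintype ι] (I : ι → Ideal A)

theorem eventually_mem_associatedPrimes_prodPow_mul_or (K J p : Ideal A) :
    (∀ᶠ n in atTop, p ∈ associatedPrimes A ((prodPow I n * K).Subquotient (prodPow I n * J))) ∨
      ∀ᶠ n in atTop, p ∉ associatedPrimes A ((prodPow I n * K).Subquotient (prodPow I n * J)) := by
  by_cases hp : p.IsPrime
  swap
  · exact .inr (Eventually.of_forall fun n h => hp h.isPrime)
  set H : (ι →₀ ℕ) → Ideal A := fun n => prodPow I n * K ⊓ (prodPow I n * J).colon p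
  have hH : ∀ a b, prodPow I a * H b ≤ H (a + b) := fun a b => le_inf
    ((Ideal.mul_mono_right inf_le_left).trans_eq (prodPow_mul_prodPow_mul I a b K))
    ((Ideal.mul_mono_right inf_le_right).trans
      ((Ideal.mul_colon_le _ _ _).trans_eq (by rw [prodPow_mul_prodPow_mul])))
  have hstable := eventually_apply_add_single_le_mul
    (H := H) (fun n => inf_le_left.trans Ideal.mul_le_left) hH
  simp only [Ideal.mem_associatedPrimes_subquotient_iff hp]
  -- by stability of `H`, the ideals `(𝕀(n) J : H n)` eventually grow along each coordinate
  refine (Finsupp.eventually_or_eventually_not_of_step (P := fun n =>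
    ¬ (prodPow I n * J).colon ↑(H n) ≤ p) ?_).symm.imp (fun h => h.mono fun _ => not_not.1) id
  filter_upwards [hstable] with n hn j hnp hle
  refine hnp ((Ideal.colon_le_mul_colon_mul (I j) _ _).trans ?_ |>.trans hle)
  rw [mul_left_comm, ← prodPow_add_single_mul]
  exact colon_mono le_rfl (hn j)

theorem exists_eventually_associatedPrimes_prodPow_mul_subquotient_eq (K J : Ideal A) :
    ∃ S, ∀ᶠ n in atTop,
      associatedPrimes A ((prodPow I n * K).Subquotient (prodPow I n * J)) = S :=
  Filter.exists_eventually_eq_of_subset_finite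
    (associatedPrimes_quotient_finite _)
    (fun n => (associatedPrimes_subquotient_subset_of_le Ideal.mul_le_left).trans
      (associatedPrimes_subquotient_prodPow_subset I J n))
    (fun p _ => eventually_mem_associatedPrimes_prodPow_mul_or I K J p)

theorem exists_eventually_associatedPrimes_quotient_prodPow_mul_eq (K : Ideal A) :
    ∃ S, ∀ᶠ n in atTop, associatedPrimes A (K.Subquotient (prodPow I n * K)) = S := by
  choose S hS using fun i =>
    exists_eventually_associatedPrimes_prodPow_mul_subquotient_eq I K (I i * K)
  have hBB : ∀ n i, associatedPrimes A ((prodPow I n * K).Subquotient (prodPow I n * (I i * K))) ⊆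
      associatedPrimes A (K.Subquotient (prodPow I (n + single i 1) * K)) := fun n i => by
    rw [prodPow_add_single_mul]
    exact associatedPrimes_subquotient_subset_of_le Ideal.mul_le_right
  have hstep : ∀ n i, associatedPrimes A (K.Subquotient (prodPow I (n + single i 1) * K)) ⊆
      associatedPrimes A ((prodPow I n * K).Subquotient (prodPow I n * (I i * K))) ∪
        associatedPrimes A (K.Subquotient (prodPow I n * K)) := fun n i => by
    rw [prodPow_add_single_mul]
    exact associatedPrimes_subquotient_subset_union (Ideal.mul_mono_right Ideal.mul_le_right)
      Ideal.mul_le_right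
  have hS' := eventually_all.2 hS
  set B := ⋃ i, S i
  have hB : ∀ᶠ n in atTop, B ⊆ associatedPrimes A (K.Subquotient (prodPow I n * K)) :=
    (eventually_all.2 fun i => Finsupp.eventually_of_eventually_add (single i 1)
      ((hS i).mono fun n hn => hn ▸ hBB n i)).mono fun _ hn => Set.iUnion_subset hn
  obtain ⟨T, hT⟩ := Finsupp.exists_eventually_eq_of_step_subset
    (g := fun n => associatedPrimes A (K.Subquotient (prodPow I n * K)) \ B)
    (fun n => (associatedPrimes.finite A _).sdiff) <| hS'.mono fun n hn j p ⟨hp, hpB⟩ =>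
      (hstep n j hp).elim (fun h => absurd (Set.mem_iUnion.2 ⟨j, hn j ▸ h⟩) hpB) fun h => ⟨h, hpB⟩
  exact ⟨T ∪ B, (hT.and hB).mono fun n hn => by rw [← hn.1, Set.sdiff_union_of_subset hn.2]⟩

end PowerFiltration

namespace TrivSqZeroExt

variable {R M : Type*} [CommRing R] [AddCommGroup M] [Module R M] [Module Rᵐᵒᵖ M]
  [IsCentralScalar R M]

instance [IsNoetherianRing R] [Module.Finite R M] : IsNoetherianRing (TrivSqZeroExt R M) :=
  have : Module.Finite R (TrivSqZeroExt R M) := inferInstanceAs (Module.Finite R (R × M))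
  isNoetherianRing_iff.2 (isNoetherian_of_tower R inferInstance)

theorem mem_map_algebraMap_mul_kerIdeal {J : Ideal R} {x : TrivSqZeroExt R M} :
    x ∈ J.map (algebraMap R (TrivSqZeroExt R M)) * kerIdeal R M ↔
      x.fst = 0 ∧ x.snd ∈ J • (⊤ : Submodule R M) := by
  have hfst : J.map (algebraMap R (TrivSqZeroExt R M)) ≤ J.comap (fstHom R R M) :=
    Ideal.map_le_iff_le_comap.2 fun r hr => by simpa using hr
  constructor
  · intro hx
    refine Submodule.mul_induction_on hx (fun w hw k hk => ?_) fun x y hx hy => ?_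
    · have hk0 : k.fst = 0 := hk
      refine ⟨by simp [hk0], ?_⟩
      rw [snd_mul, hk0, MulOpposite.op_zero, zero_smul, add_zero]
      exact Submodule.smul_mem_smul (hfst hw) Submodule.mem_top
    · exact ⟨by simp [hx.1, hy.1], by simpa using add_mem hx.2 hy.2⟩
  · rintro ⟨h0, hJ⟩
    rw [(mem_kerIdeal_iff_inr R M x).1 h0]
    refine Submodule.smul_induction_on hJ (fun r hr m _ => ?_) fun m m' hm hm' => ?_
    · rw [← inl_mul_inr]
      exact Ideal.mul_mem_mul (Ideal.mem_map_of_mem _ hr) ((mem_kerIdeal_iff_inr R M _).2 rfl)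
    · rw [inr_add]
      exact add_mem hm hm'

variable (R M) in
def kerIdealSnd : kerIdeal R M →ₛₗ[(fstHom R R M : TrivSqZeroExt R M →+* R)] M where
  toFun x := x.1.snd
  map_add' _ _ := rfl
  map_smul' a x := by
    have hx : x.1.fst = 0 := x.2
    change (a * x.1).snd = a.fst • x.1.snd
    rw [snd_mul, hx, MulOpposite.op_zero, zero_smul, add_zero]

theorem kerIdealSnd_apply (x : kerIdeal R M) : kerIdealSnd R M x = x.1.snd := rfl

theorem associatedPrimes_subquotient_kerIdeal (J : Ideal R) :
    associatedPrimes (TrivSqZeroExt R M) ((kerIdeal R M).Subquotient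
      (J.map (algebraMap R (TrivSqZeroExt R M)) * kerIdeal R M)) =
      Ideal.comap (fstHom R R M : TrivSqZeroExt R M →+* R) ''
        associatedPrimes R (M ⧸ J • (⊤ : Submodule R M)) := by
  let g := (J • (⊤ : Submodule R M)).mkQ ∘ₛₗ kerIdealSnd R M
  have hker : (J.map (algebraMap R (TrivSqZeroExt R M)) * kerIdeal R M).submoduleOf
      (kerIdeal R M) = LinearMap.ker g := by
    ext x
    have hx : x.1.fst = 0 := x.2
    simp [g, kerIdealSnd_apply, mem_map_algebraMap_mul_kerIdeal, Submodule.submoduleOf, hx]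
  dsimp only [Submodule.Subquotient]
  rw [hker]
  refine associatedPrimes_quotient_ker_eq_image_comap
    (fun r => ⟨inl r, fst_inl M r⟩) fun y => ?_
  obtain ⟨m, rfl⟩ := Submodule.mkQ_surjective _ y
  exact ⟨⟨inr m, fst_inr R m⟩, rfl⟩

end TrivSqZeroExt

open Ideal TrivSqZeroExt in
theorem exists_eventually_associatedPrimes_quotient_prodPow_smul_eq {ι R M : Type*} [Fintype ι]
    [CommRing R] [IsNoetherianRing R] [AddCommGroup M] [Module R M] [Module.Finite R M]
    (I : ι → Ideal R) :
    ∃ S, ∀ᶠ n in atTop, associatedPrimes R (M ⧸ prodPow I n • (⊤ : Submodule R M)) = S := by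
  -- `TrivSqZeroExt` needs a right action of `R`; over a commutative ring take the left one.
  let : Module Rᵐᵒᵖ M := Module.compHom M ((RingHom.id R).fromOpposite mul_comm)
  have : IsCentralScalar R M := ⟨fun _ _ => rfl⟩
  let σ : TrivSqZeroExt R M →+* R := fstHom R R M
  have hσ : Function.Surjective σ := fun r => ⟨inl r, fst_inl M r⟩
  have hmap : ∀ n, prodPow (fun j => (I j).map (algebraMap R (TrivSqZeroExt R M))) n =
      (prodPow I n).map (algebraMap R (TrivSqZeroExt R M)) := fun n => by
    simp only [prodPow, ← Ideal.map_pow]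
    exact (map_prod (Ideal.mapHom (algebraMap R (TrivSqZeroExt R M))) _ _).symm
  obtain ⟨T, hT⟩ := exists_eventually_associatedPrimes_quotient_prodPow_mul_eq
    (fun j => (I j).map (algebraMap R (TrivSqZeroExt R M))) (kerIdeal R M)
  have htransfer : ∀ n, associatedPrimes (TrivSqZeroExt R M) ((kerIdeal R M).Subquotient
      (prodPow (fun j => (I j).map (algebraMap R (TrivSqZeroExt R M))) n * kerIdeal R M)) =
      Ideal.comap σ '' associatedPrimes R (M ⧸ prodPow I n • (⊤ : Submodule R M)) := fun n => by
    rw [hmap]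
    exact associatedPrimes_subquotient_kerIdeal _
  obtain ⟨n₀, hn₀⟩ := hT.exists
  refine ⟨associatedPrimes R (M ⧸ prodPow I n₀ • (⊤ : Submodule R M)), hT.mono fun n hn =>
    Set.image_injective.2 (Ideal.comap_injective_of_surjective σ hσ) ?_⟩
  rw [← htransfer, ← htransfer, hn, hn₀]

/-- **Kingsbury–Sharp theorem.** For ideals `I 1, …, I t` of a commutative Noetherian
ring `R` and a finitely generated `R`-module `M`, the set of associated primes of
`M / (I₁^{n₁} ⋯ I_t^{n_t}) M` is independent of `(n₁, …, n_t)` for all `n_j` large. -/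
theorem kingsbury_sharp_ass_stable (R : Type*) [CommRing R] [IsNoetherianRing R]
    (t : ℕ) (I : Fin t → Ideal R)
    (M : Type*) [AddCommGroup M] [Module R M] [Module.Finite R M] :
    ∃ k : ℕ, ∀ n m : Fin t → ℕ, (∀ j, k ≤ n j) → (∀ j, k ≤ m j) →
      associatedPrimes R (M ⧸ ((∏ j, I j ^ n j) • (⊤ : Submodule R M))) =
        associatedPrimes R (M ⧸ ((∏ j, I j ^ m j) • (⊤ : Submodule R M))) := by
  obtain ⟨S, hS⟩ := exists_eventually_associatedPrimes_quotient_prodPow_smul_eq (M := M) I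
  obtain ⟨N, hN⟩ := eventually_atTop.1 hS
  have key : ∀ n : Fin t → ℕ, (∀ j, N.degree ≤ n j) →
      associatedPrimes R (M ⧸ ((∏ j, I j ^ n j) • (⊤ : Submodule R M))) = S := fun n hn => by
    have := hN (Finsupp.equivFunOnFinite.symm n) fun j => by
      simpa using (Finsupp.le_degree j N).trans (hn j)
    simp only [Ideal.prodPow] at this
    exact this
  exact ⟨N.degree, fun n m hn hm => (key n hn).trans (key m hm).symm⟩
end

section
/- Let R be a commutative Noetherian ring, I an ideal, and M a finitely generated R-module. Then the union over all n ∈ ℕ of Ass_R(M/I^n M) is a finite set. -/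
/-!
The exact sequences `0 → IⁿM/Iⁿ⁺¹M → M/Iⁿ⁺¹M → M/IⁿM → 0` put every `Ass(M/IⁿM)` inside the
union of the `Ass(IᵏM/Iᵏ⁺¹M)`. Each `IᵏM/Iᵏ⁺¹M` embeds `R`-linearly, as its degree `k` part,
into `G = ⊕ₖ IᵏM/Iᵏ⁺¹M`, which is a finitely generated module over the Noetherian Rees algebra
`R[It]`. So all these primes lie in `Ass_R G`, the contraction of the finite set `Ass_{R[It]} G`.
-/

open Submodule

namespace Submodule

theorem colon_bot_singleton_le_smul {R S M : Type*} [CommRing R] [AddCommGroup M] [Module R M]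
    [Monoid S] [DistribMulAction S M] [SMulCommClass S R M] (a : S) (y : M) :
    (⊥ : Submodule R M).colon {y} ≤ (⊥ : Submodule R M).colon {a • y} := by
  intro c hc
  rw [mem_colon_singleton, mem_bot] at hc ⊢
  rw [← smul_comm, hc, smul_zero]

theorem colon_bot_singleton_smul_eq {R M : Type*} [CommRing R] [AddCommGroup M] [Module R M]
    {p : Ideal R} (hp : p.IsPrime) {y : M} (hy : (⊥ : Submodule R M).colon {y} = p) {c : R}
    (hc : c ∉ p) : (⊥ : Submodule R M).colon {c • y} = p := by
  refine le_antisymm (fun r hr => ?_) (hy ▸ colon_bot_singleton_le_smul c y)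
  rw [mem_colon_singleton, mem_bot, smul_smul] at hr
  have hrc : r * c ∈ p := by rw [← hy, mem_colon_singleton, mem_bot, hr]
  exact (hp.mem_or_mem hrc).resolve_right hc

end Submodule

namespace associatedPrimes

section

variable {R M P Q : Type*} [CommRing R] [AddCommGroup M] [Module R M] [AddCommGroup P]
  [Module R P] [AddCommGroup Q] [Module R Q]

theorem quotient_subset_union_of_le {N N' : Submodule R M} (h : N' ≤ N) :
    associatedPrimes R (M ⧸ N') ⊆
      associatedPrimes R (N.map N'.mkQ) ∪ associatedPrimes R (M ⧸ N) := by
  rw [← LinearEquiv.AssociatedPrimes.eq (quotientQuotientEquivQuotient N' N h)]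
  exact subset_union_of_exact (injective_subtype _) (LinearMap.exact_subtype_mkQ _)

theorem quotient_subset_union_iUnion_of_antitone {F : ℕ → Submodule R M} (hF : Antitone F)
    (n : ℕ) : associatedPrimes R (M ⧸ F n) ⊆
      associatedPrimes R (M ⧸ F 0) ∪ ⋃ k, associatedPrimes R ((F k).map (F (k + 1)).mkQ) := by
  induction n with
  | zero => exact Set.subset_union_left
  | succ n ih =>
    refine (quotient_subset_union_of_le (hF n.le_succ)).trans (Set.union_subset ?_ ih)
    exact (Set.subset_iUnion (fun k => associatedPrimes R ((F k).map (F (k + 1)).mkQ)) n).trans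
      Set.subset_union_right

theorem range_subset_of_ker_eq {f : M →ₗ[R] P} {g : M →ₗ[R] Q}
    (h : LinearMap.ker f = LinearMap.ker g) :
    associatedPrimes R (LinearMap.range f) ⊆ associatedPrimes R Q := by
  rw [← LinearEquiv.AssociatedPrimes.eq f.quotKerEquivRange,
    LinearEquiv.AssociatedPrimes.eq (quotEquivOfEq _ _ h),
    LinearEquiv.AssociatedPrimes.eq g.quotKerEquivRange]
  exact subset_of_injective (injective_subtype _)

end

theorem subset_image_comap {R S N : Type*} [CommRing R] [CommRing S] [Algebra R S]
    [IsNoetherianRing R] [IsNoetherianRing S] [AddCommGroup N] [Module R N] [Module S N]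
    [IsScalarTower R S N] :
    associatedPrimes R N ⊆ Ideal.comap (algebraMap R S) '' associatedPrimes S N := by
  rintro p hp
  obtain ⟨hprime, x, hx⟩ := isAssociatedPrime_iff.mp hp
  -- Among the `y` with `ann_R y = p`, take one whose `ann_S y` is maximal: that ideal is prime.
  obtain ⟨_, ⟨y, hy, rfl⟩, hmax⟩ := set_has_maximal_iff_noetherian.mpr inferInstance
    {Q : Ideal S | ∃ y : N, (⊥ : Submodule R N).colon {y} = p ∧ Q = (⊥ : Submodule S N).colon {y}}
    ⟨_, x, hx.symm, rfl⟩
  have hcolonS : ∀ b : S, (⊥ : Submodule R N).colon {b • y} = p →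
      (⊥ : Submodule S N).colon {b • y} = (⊥ : Submodule S N).colon {y} := fun b hb =>
    ((colon_bot_singleton_le_smul b y).lt_or_eq.resolve_left (hmax _ ⟨_, hb, rfl⟩)).symm
  have hcolonR : ∀ b : S, b • y ≠ 0 → (⊥ : Submodule R N).colon {b • y} = p := by
    intro b hb
    refine le_antisymm (fun r hr => ?_) (hy ▸ colon_bot_singleton_le_smul b y)
    by_contra hrp
    rw [mem_colon_singleton, mem_bot, smul_comm] at hr
    have hr' := hcolonS (algebraMap R S r)
      (by rw [algebraMap_smul, colon_bot_singleton_smul_eq hprime hy hrp])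
    rw [algebraMap_smul] at hr'
    apply hb
    rw [← mem_bot S, ← mem_colon_singleton, ← hr', mem_colon_singleton, hr, mem_bot]
  have hQ : ((⊥ : Submodule S N).colon {y}).IsPrime := by
    refine ⟨fun htop => ?_, fun {a b} hab => or_iff_not_imp_right.mpr fun hb => ?_⟩
    · have hy0 : y = 0 := by simpa using (Ideal.eq_top_iff_one _).mp htop
      exact hprime.ne_top (by rw [← hy, hy0, Ideal.eq_top_iff_one]; simp)
    · have hby : b • y ≠ 0 := by rwa [mem_colon_singleton, mem_bot] at hb
      rw [← hcolonS b (hcolonR b hby), mem_colon_singleton, smul_smul]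
      rwa [mem_colon_singleton] at hab
  refine ⟨_, isAssociatedPrime_iff.mpr ⟨hQ, y, rfl⟩, ?_⟩
  ext r
  rw [Ideal.mem_comap, mem_colon_singleton, mem_bot, algebraMap_smul, ← hy,
    mem_colon_singleton, mem_bot]

theorem finite_of_isScalarTower (R S N : Type*) [CommRing R] [CommRing S] [Algebra R S]
    [IsNoetherianRing R] [IsNoetherianRing S] [AddCommGroup N] [Module R N] [Module S N]
    [IsScalarTower R S N] [Module.Finite S N] : (associatedPrimes R N).Finite :=
  ((associatedPrimes.finite S N).image _).subset subset_image_comap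

end associatedPrimes

open PolynomialModule

namespace Ideal.Filtration

variable {R M : Type*} [CommRing R] [AddCommGroup M] [Module R M] {I : Ideal R}
  (F : I.Filtration M)

theorem single_mem_submodule {k : ℕ} {x : M} (hx : x ∈ F.N k) : single R k x ∈ F.submodule := by
  intro i
  rw [coeff_single, Finsupp.single_apply]
  split_ifs with hki
  · exact hki ▸ hx
  · exact zero_mem _

theorem single_mem_map_smul_submodule_iff (J : Ideal R) (k : ℕ) (x : M) :
    single R k x ∈ J.map (algebraMap R (reesAlgebra I)) • F.submodule ↔ x ∈ J • F.N k := by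
  rw [← restrictScalars_mem R, Ideal.smul_restrictScalars]
  constructor
  · intro h
    let coeffK : PolynomialModule R M →ₗ[R] M :=
      Finsupp.lapply k ∘ₗ (coeffLinearEquiv R R).toLinearMap
    have hle : F.submodule.restrictScalars R ≤ (F.N k).comap coeffK := fun f hf => hf k
    simpa [coeffK] using smul_comap_le_comap_smul coeffK (F.N k) J (smul_mono_right J hle h)
  · intro h
    have hle : (F.N k).map (lsingle R k) ≤ F.submodule.restrictScalars R := by
      rintro _ ⟨y, hy, rfl⟩
      exact F.single_mem_submodule hy
    have h' := Submodule.mem_map_of_mem (f := lsingle R k) h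
    rw [map_smul''] at h'
    exact smul_mono_right J hle h'

/-- `⊕ₖ Fₖ / I Fₖ`, realised as the image of `F.submodule` in `M[X] ⧸ I • F.submodule`. -/
noncomputable def reesQuotient : Submodule (reesAlgebra I)
    (PolynomialModule R M ⧸ I.map (algebraMap R (reesAlgebra I)) • F.submodule) :=
  F.submodule.map (mkQ _)

noncomputable def toReesQuotient (k : ℕ) : F.N k →ₗ[R] F.reesQuotient :=
  LinearMap.codRestrict (F.reesQuotient.restrictScalars R)
    ((mkQ _).restrictScalars R ∘ₗ lsingle R k ∘ₗ (F.N k).subtype)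
    fun x => ⟨single R k x, F.single_mem_submodule x.2, rfl⟩

theorem ker_toReesQuotient (k : ℕ) :
    LinearMap.ker (F.toReesQuotient k) = (I • F.N k).comap (F.N k).subtype := by
  ext x
  rw [LinearMap.mem_ker, Submodule.mem_comap, subtype_apply,
    ← F.single_mem_map_smul_submodule_iff, ← Submodule.Quotient.mk_eq_zero]
  exact Subtype.ext_iff

theorem associatedPrimes_map_mkQ_subset {k : ℕ} (hk : I • F.N k = F.N (k + 1)) :
    associatedPrimes R ((F.N k).map (F.N (k + 1)).mkQ) ⊆ associatedPrimes R F.reesQuotient := by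
  rw [← range_subtype (F.N k), ← LinearMap.range_comp]
  refine associatedPrimes.range_subset_of_ker_eq (g := F.toReesQuotient k) ?_
  rw [ker_toReesQuotient, hk, LinearMap.ker_comp, ker_mkQ]

theorem finite_associatedPrimes_reesQuotient [IsNoetherianRing R] [Module.Finite R M]
    (hF : F.Stable) : (associatedPrimes R F.reesQuotient).Finite :=
  have : Module.Finite (reesAlgebra I) F.reesQuotient := Module.Finite.iff_fg.mpr <|
    ((F.submodule_fg_iff_stable fun _ => IsNoetherian.noetherian _).mpr hF).map _
  associatedPrimes.finite_of_isScalarTower R (reesAlgebra I) F.reesQuotient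

end Ideal.Filtration

/-- The union over all `n ∈ ℕ` of the sets of associated primes of `M/IⁿM` is finite. -/
theorem finite_union_ass_quotient_powers (R : Type*) [CommRing R] [IsNoetherianRing R]
    (I : Ideal R) (M : Type*) [AddCommGroup M] [Module R M] [Module.Finite R M] :
    (⋃ n : ℕ, associatedPrimes R (M ⧸ (I ^ n • (⊤ : Submodule R M)))).Finite := by
  let F := I.stableFiltration (⊤ : Submodule R M)
  have hpieces (k : ℕ) : associatedPrimes R ((F.N k).map (F.N (k + 1)).mkQ) ⊆
      associatedPrimes R F.reesQuotient :=
    F.associatedPrimes_map_mkQ_subset <| show I • I ^ k • ⊤ = I ^ (k + 1) • ⊤ by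
      rw [pow_succ', Submodule.mul_smul]
  refine ((associatedPrimes.finite R (M ⧸ F.N 0)).union
    (F.finite_associatedPrimes_reesQuotient (I.stableFiltration_stable ⊤))).subset
    (Set.iUnion_subset fun n => ?_)
  exact (associatedPrimes.quotient_subset_union_iUnion_of_antitone F.antitone n).trans
    (Set.union_subset_union_right _ (Set.iUnion_subset hpieces))
end
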